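/- For every real number x ≥ 1 and every integer a ≥ 3, one has Δ_{a,1}(x) := P_{a−1}(x) · P₂(x) − P_a(x) · P₁(x) > 0. -/

import Mathlib

/-!
Write `pₙ = Pₙ(x)`. Since `p₁ = x` and `p₂ = x(x+5)/2`, the claim is `2 p_{n+3} < (x+5) p_{n+2}`.
Combining the recurrence at two consecutive indices gives, for all `α β`,
`(n+2)(α p_{n+1} - β p_{n+2}) = (α - βx) p_{n+1} + x ∑_{i+j=n} (α σ₂(i+1) - β σ₂(i+2)) pⱼ`.
For `(α, β) = (x+5, 2)` all coefficients past the first are nonnegative, because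
`i² ≤ σ₂(i) ≤ ζ(2) i²` gives `σ₂(i+1) ≤ 5/2 σ₂(i)` for `i ≥ 2`; the first one leaves
`(5 - x)(p_{n+2} - x p_{n+1})`, which the case `(α, β) = (x, 1)` bounds below by `-x(5x+5) pₙ`,
and that is absorbed by the second coefficient `5x + 5`.
-/

/-- `σ₂(n) = ∑_{d ∣ n} d²`, the sum of the squares of the divisors of `n`. -/
def sigma2 (n : ℕ) : ℕ := ∑ d ∈ n.divisors, d ^ 2

/-- The polynomials `Pₙ`, defined by `P 0 = 1` and
`Pₙ(x) = (x/n) ∑_{k=1}^{n} σ₂(k) · P_{n−k}(x)` for `n ≥ 1`.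
They satisfy `Pₙ(1) = pp(n)`, the number of plane partitions of `n`. -/
noncomputable def P : ℕ → Polynomial ℝ
  | 0 => 1
  | n + 1 => Polynomial.C (((n : ℝ) + 1)⁻¹) * Polynomial.X *
      ∑ k ∈ Finset.range (n + 1), Polynomial.C ((sigma2 (k + 1) : ℝ)) * P (n - k)

open Finset Polynomial

lemma sigma2_zero : sigma2 0 = 0 := rfl

lemma sigma2_one : sigma2 1 = 1 := by decide

lemma sigma2_two : sigma2 2 = 5 := by decide

lemma sigma2_three : sigma2 3 = 10 := by decide

lemma sq_le_sigma2 (n : ℕ) : n ^ 2 ≤ sigma2 n := by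
  rcases n.eq_zero_or_pos with rfl | hn
  · rfl
  · exact single_le_sum (f := (· ^ 2)) (fun _ _ ↦ Nat.zero_le _) (Nat.mem_divisors_self n hn.ne')

lemma sigma2_le_two_mul_sq (n : ℕ) : sigma2 n ≤ 2 * n ^ 2 := by
  have key : (sigma2 n : ℝ) ≤ 2 * n ^ 2 := by
    calc (sigma2 n : ℝ) = ∑ d ∈ n.divisors, ((n / d : ℕ) : ℝ) ^ 2 := by
          rw [sigma2, ← Nat.sum_div_divisors]; push_cast; rfl
      _ ≤ ∑ d ∈ n.divisors, (n : ℝ) ^ 2 * ((d : ℝ) ^ 2)⁻¹ := by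
          refine sum_le_sum fun d _ ↦ ?_
          rw [← div_eq_mul_inv, ← div_pow]
          gcongr
          exact Nat.cast_div_le
      _ ≤ ∑ d ∈ Ioo 0 (n + 1), (n : ℝ) ^ 2 * ((d : ℝ) ^ 2)⁻¹ := by
          refine sum_le_sum_of_subset_of_nonneg (fun d hd ↦ ?_) (fun _ _ _ ↦ by positivity)
          have := Nat.pos_of_mem_divisors hd
          have := Nat.divisor_le hd
          simp only [mem_Ioo]; omega
      _ = (n : ℝ) ^ 2 * ∑ d ∈ Ioo 0 (n + 1), ((d : ℝ) ^ 2)⁻¹ := by rw [mul_sum]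
      _ ≤ (n : ℝ) ^ 2 * 2 := by
          gcongr
          simpa using sum_Ioo_inv_sq_le (α := ℝ) 0 (n + 1)
      _ = 2 * n ^ 2 := mul_comm _ _
  exact_mod_cast key

lemma two_mul_sigma2_succ_le {n : ℕ} (hn : 2 ≤ n) : 2 * sigma2 (n + 1) ≤ 5 * sigma2 n := by
  -- `2 · 2(n+1)² ≤ 5n²` as soon as `n ≥ 9`
  rcases lt_or_ge n 9 with hn9 | hn9
  · interval_cases n <;> decide
  · nlinarith [sigma2_le_two_mul_sq (n + 1), sq_le_sigma2 n]

lemma five_sub_mul_sigma2_le {x : ℝ} (hx : 1 ≤ x) (i : ℕ) :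
    (5 - x) * (x * sigma2 (i + 1) - sigma2 (i + 2)) ≤ x * (5 * x + 5) * sigma2 i := by
  match i with
  | 0 =>
    simp only [Nat.reduceAdd, sigma2_zero, sigma2_one, sigma2_two]; push_cast
    nlinarith [sq_nonneg (x - 5)]
  | 1 =>
    simp only [Nat.reduceAdd, sigma2_one, sigma2_two, sigma2_three]; push_cast
    nlinarith [sq_nonneg (x - 3 / 2)]
  | i + 2 =>
    have hb : 2 * (sigma2 (i + 3) : ℝ) ≤ 5 * sigma2 (i + 2) := by
      exact_mod_cast two_mul_sigma2_succ_le (by omega)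
    have hc : 2 * (sigma2 (i + 4) : ℝ) ≤ 5 * sigma2 (i + 3) := by
      exact_mod_cast two_mul_sigma2_succ_le (by omega)
    have hx0 : 0 ≤ x := by linarith
    have ha0 : (0 : ℝ) ≤ sigma2 (i + 2) := by positivity
    have hc0 : (0 : ℝ) ≤ sigma2 (i + 4) := by positivity
    rcases le_total x 5 with h5 | h5
    · nlinarith [mul_nonneg (sub_nonneg.2 h5) hc0,
        mul_nonneg (mul_nonneg (sub_nonneg.2 h5) hx0) (sub_nonneg.2 hb),
        mul_nonneg (mul_nonneg hx0 ha0) (sub_nonneg.2 hx)]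
    · have : (0 : ℝ) ≤ x * sigma2 (i + 3) - sigma2 (i + 4) := by nlinarith
      nlinarith [mul_nonneg (sub_nonneg.2 h5) this, mul_nonneg (by positivity : 0 ≤ x * (5 * x + 5)) ha0]

lemma eval_P_one (x : ℝ) : (P 1).eval x = x := by
  simp [P, sigma2_one]

lemma eval_P_two (x : ℝ) : (P 2).eval x = x * (x + 5) / 2 := by
  simp [P, sum_range_succ, sigma2_one, sigma2_two]
  ring

lemma succ_mul_eval_P_succ (x : ℝ) (n : ℕ) :
    ((n : ℝ) + 1) * (P (n + 1)).eval x =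
      x * ∑ ij ∈ antidiagonal n, (sigma2 (ij.1 + 1) : ℝ) * (P ij.2).eval x := by
  rw [Nat.sum_antidiagonal_eq_sum_range_succ (fun i j ↦ (sigma2 (i + 1) : ℝ) * (P j).eval x)]
  simp only [P, eval_mul, eval_C, eval_X, eval_finsetSum]
  field_simp

lemma natCast_mul_eval_P (x : ℝ) (n : ℕ) :
    (n : ℝ) * (P n).eval x = x * ∑ ij ∈ antidiagonal n, (sigma2 ij.1 : ℝ) * (P ij.2).eval x := by
  cases n with
  | zero => simp [sigma2_zero]
  | succ n =>
    rw [Nat.sum_antidiagonal_succ]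
    simpa [sigma2_zero] using succ_mul_eval_P_succ x n

lemma eval_P_pos {x : ℝ} (hx : 0 < x) (n : ℕ) : 0 < (P n).eval x := by
  induction n using Nat.strong_induction_on with
  | _ n ih =>
  cases n with
  | zero => simp [P]
  | succ n =>
    have h : 0 < x * ∑ ij ∈ antidiagonal n, (sigma2 (ij.1 + 1) : ℝ) * (P ij.2).eval x := by
      refine mul_pos hx (sum_pos (fun ij hij ↦ mul_pos ?_ (ih _ ?_)) ⟨(0, n), by simp⟩)
      · exact_mod_cast (show 0 < (ij.1 + 1) ^ 2 by positivity).trans_le (sq_le_sigma2 _)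
      · have := mem_antidiagonal.1 hij; omega
    rw [← succ_mul_eval_P_succ] at h
    exact pos_of_mul_pos_right h (by positivity)

lemma natCast_add_two_mul_sub_eval_P (x α β : ℝ) (n : ℕ) :
    ((n : ℝ) + 2) * (α * (P (n + 1)).eval x - β * (P (n + 2)).eval x) =
      (α - β * x) * (P (n + 1)).eval x + x * ∑ ij ∈ antidiagonal n,
        (α * sigma2 (ij.1 + 1) - β * sigma2 (ij.1 + 2)) * (P ij.2).eval x := by
  have h₁ := succ_mul_eval_P_succ x n
  have h₂ := succ_mul_eval_P_succ x (n + 1)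
  rw [Nat.sum_antidiagonal_succ, sigma2_one] at h₂
  simp only [sub_mul, mul_assoc, sum_sub_distrib, ← mul_sum] at h₁ h₂ ⊢
  push_cast at h₂ ⊢
  linear_combination α * h₁ - β * h₂

lemma five_sub_mul_sub_eval_P_lt {x : ℝ} (hx : 1 ≤ x) (n : ℕ) :
    (5 - x) * (x * (P (n + 1)).eval x - (P (n + 2)).eval x) < x * (5 * x + 5) * (P n).eval x := by
  have hx0 : 0 < x := by linarith
  have hpn := eval_P_pos hx0 n
  have hid := natCast_add_two_mul_sub_eval_P x x 1 n
  simp only [one_mul, sub_self, zero_mul, zero_add] at hid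
  refine lt_of_mul_lt_mul_left ?_ (by positivity : (0 : ℝ) ≤ n + 2)
  calc ((n : ℝ) + 2) * ((5 - x) * (x * (P (n + 1)).eval x - (P (n + 2)).eval x))
      = x * ∑ ij ∈ antidiagonal n,
          (5 - x) * (x * sigma2 (ij.1 + 1) - sigma2 (ij.1 + 2)) * (P ij.2).eval x := by
        rw [mul_left_comm, hid, mul_sum, mul_sum, mul_sum]
        exact sum_congr rfl fun _ _ ↦ by ring
    _ ≤ x * ∑ ij ∈ antidiagonal n, x * (5 * x + 5) * sigma2 ij.1 * (P ij.2).eval x := by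
        refine mul_le_mul_of_nonneg_left (sum_le_sum fun ij _ ↦ ?_) hx0.le
        exact mul_le_mul_of_nonneg_right (five_sub_mul_sigma2_le hx _) (eval_P_pos hx0 _).le
    _ = (n : ℝ) * (x * (5 * x + 5) * (P n).eval x) := by
        rw [mul_left_comm, natCast_mul_eval_P, mul_sum, mul_sum, mul_sum]
        exact sum_congr rfl fun _ _ ↦ by ring
    _ < ((n : ℝ) + 2) * (x * (5 * x + 5) * (P n).eval x) := by
        gcongr
        linarith

lemma two_mul_eval_P_lt {x : ℝ} (hx : 1 ≤ x) (n : ℕ) :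
    2 * (P (n + 3)).eval x < (x + 5) * (P (n + 2)).eval x := by
  have hx0 : 0 < x := by linarith
  have hid := natCast_add_two_mul_sub_eval_P x (x + 5) 2 (n + 1)
  rw [Nat.sum_antidiagonal_succ, sigma2_one, sigma2_two] at hid
  simp only [add_assoc, Nat.reduceAdd] at hid
  have hsum : (5 * x + 5) * (P n).eval x ≤ ∑ ij ∈ antidiagonal n,
      ((x + 5) * sigma2 (ij.1 + 2) - 2 * sigma2 (ij.1 + 3)) * (P ij.2).eval x := by
    have hterm : ∀ ij ∈ antidiagonal n,
        0 ≤ ((x + 5) * sigma2 (ij.1 + 2) - 2 * sigma2 (ij.1 + 3)) * (P ij.2).eval x := by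
      intro ij _
      refine mul_nonneg ?_ (eval_P_pos hx0 _).le
      have h : (2 * sigma2 (ij.1 + 3) : ℝ) ≤ 5 * sigma2 (ij.1 + 2) := by
        exact_mod_cast two_mul_sigma2_succ_le (n := ij.1 + 2) (by omega)
      have : (0 : ℝ) ≤ sigma2 (ij.1 + 2) := by positivity
      nlinarith
    refine le_of_eq_of_le ?_ (single_le_sum hterm (by simp : (0, n) ∈ antidiagonal n))
    simp only [zero_add, sigma2_two, sigma2_three]
    push_cast
    ring
  have hpos : 0 < ((n : ℝ) + 3) * ((x + 5) * (P (n + 2)).eval x - 2 * (P (n + 3)).eval x) := by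
    push_cast at hid
    linarith [mul_le_mul_of_nonneg_left hsum hx0.le, five_sub_mul_sub_eval_P_lt hx n]
  linarith [pos_of_mul_pos_right hpos (by positivity)]

/-- For every real `x ≥ 1` and every integer `a ≥ 3`:
`Δ_{a,1}(x) = P (a-1) · P 2 − P a · P 1 > 0` at `x`. -/
theorem Delta_a_one_pos (x : ℝ) (hx : 1 ≤ x) (a : ℕ) (ha : 3 ≤ a) :
    (P (a - 1)).eval x * (P 2).eval x - (P a).eval x * (P 1).eval x > 0 := by
  obtain ⟨n, rfl⟩ := Nat.exists_eq_add_of_le' ha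
  have hD := two_mul_eval_P_lt hx n
  rw [eval_P_one, eval_P_two, show n + 3 - 1 = n + 2 by omega]
  nlinarith
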